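/- Let ω ⊂ ℝ² be a bounded measurable set of positive Lebesgue measure, Ω := ω × (−1/2, 1/2), H := L²(Ω; Sym₃), and let 𝓛 := { S ∈ H : there exist A, B ∈ L²(ω; Sym₂) such that S_{αβ}(x₁,x₂,x₃) = A_{αβ}(x₁,x₂) + x₃B_{αβ}(x₁,x₂) for a.e. x and all α,β ∈ {1,2} }. Then Σ ∈ H belongs to the orthogonal complement 𝓛⊥ if and only if Σ_{i3} = 0 a.e. in Ω for i = 1,2,3 and Σᴺ_{αβ} = Σᴹ_{αβ} = 0 a.e. in ω for all α,β ∈ {1,2}, where Σᴺ_{αβ}(x₁,x₂) := ∫_{−1/2}^{1/2} Σ_{αβ}(x₁,x₂,t) dt and Σᴹ_{αβ}(x₁,x₂) := ∫_{−1/2}^{1/2} t·Σ_{αβ}(x₁,x₂,t) dt. -/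

import Mathlib

open Matrix MeasureTheory
open scoped RealInnerProductSpace

noncomputable section

/-- Points of the mid-plane `ℝ²`. -/
abbrev P2 := ℝ × ℝ

/-- Points of `ℝ³ = ℝ² × ℝ`. -/
abbrev Pt := P2 × ℝ

/-- Matrices `3×3` encoded as `EuclideanSpace` over the index pairs, so that the
`L²`-inner product is the integrated Frobenius inner product. -/
abbrev E9 := EuclideanSpace ℝ (Fin 3 × Fin 3)

/-- The interval `(−1/2, 1/2)`. -/
def Ioo2 : Set ℝ := Set.Ioo (-(1:ℝ)/2) (1/2)

/-- The plate `Ω := ω × (−1/2, 1/2)`. -/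
def dom (ω : Set P2) : Set Pt := ω ×ˢ Ioo2

/-- Lebesgue measure restricted to the plate `Ω`. -/
def meas (ω : Set P2) : Measure Pt := volume.restrict (dom ω)

/-- `H = L²(Ω; Sym₃)`: the a.e. symmetric elements of `L²(Ω; ℝ^{3×3})`. -/
def Hset (ω : Set P2) : Set (Lp E9 2 (meas ω)) :=
  {f | ∀ᵐ x ∂(meas ω), ∀ i j : Fin 3, f x (i, j) = f x (j, i)}

/-- `𝓛`: elements of `H` whose in-plane `2×2` block is affine in `x₃`, with coefficients
`A, B ∈ L²(ω; Sym₂)`. -/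
def Lset (ω : Set P2) : Set (Lp E9 2 (meas ω)) :=
  {f | f ∈ Hset ω ∧ ∃ A B : P2 → EuclideanSpace ℝ (Fin 2 × Fin 2),
    MemLp A 2 (volume.restrict ω) ∧ MemLp B 2 (volume.restrict ω) ∧
    (∀ᵐ y ∂(volume.restrict ω), ∀ α β : Fin 2,
      A y (α, β) = A y (β, α) ∧ B y (α, β) = B y (β, α)) ∧
    (∀ᵐ x ∂(meas ω), ∀ α β : Fin 2,
      f x (α.castSucc, β.castSucc) = A x.1 (α, β) + x.2 * B x.1 (α, β))}

/-!
Test `Σ` against the fields `g • (E_a + E_{a.swap})`. For `a = (i, 3)` they lie in `𝓛` with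
`A = B = 0`, and taking `g` an indicator gives `Σ_{i3} = 0`. For in-plane `a`, the field with
`g = 1_{s × ℝ} (c₀ + c₁ x₃)` lies in `𝓛` with `A = c₀ 1_s (E_{αβ} + E_{βα})`,
`B = c₁ 1_s (E_{αβ} + E_{βα})`, and by Fubini the pairing is `2 ∫_s (c₀ Σᴺ_{αβ} + c₁ Σᴹ_{αβ})`;
as `s` is arbitrary, both moments vanish. Conversely, once `Σ_{i3} = 0` the pairing with an
element of `𝓛` only involves the in-plane block, and Fubini turns it into
`∫_ω ∑ (A_{αβ} Σᴺ_{αβ} + B_{αβ} Σᴹ_{αβ}) = 0`.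
-/

section General

variable {α β : Type*} [MeasurableSpace α] [MeasurableSpace β]

theorem MeasureTheory.MemLp.smul_const {E : Type*} [NormedAddCommGroup E] [NormedSpace ℝ E]
    {p : ENNReal} {μ : Measure α} {g : α → ℝ} (hg : MemLp g p μ) (c : E) :
    MemLp (fun x => g x • c) p μ :=
  ((ContinuousLinearMap.id ℝ ℝ).smulRight c).comp_memLp' hg

theorem MeasureTheory.L2.inner_toLp_smul_const {E : Type*} [NormedAddCommGroup E]
    [InnerProductSpace ℝ E] {μ : Measure α} {g : α → ℝ} (hg : MemLp g 2 μ) (c : E)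
    (f : Lp E 2 μ) :
    ⟪f, (hg.smul_const c).toLp⟫ = ∫ x, g x * ⟪f x, c⟫ ∂μ := by
  rw [L2.inner_def]
  refine integral_congr_ae ?_
  filter_upwards [(hg.smul_const c).coeFn_toLp] with x hx
  rw [hx, inner_smul_right]

theorem ae_integral_eq_zero_of_forall_setIntegral_prod_eq_zero {μ : Measure α} {ν : Measure β}
    [SFinite μ] [SFinite ν] {F : α × β → ℝ} (hF : Integrable F (μ.prod ν))
    (h : ∀ s, MeasurableSet s → ∫ x in s ×ˢ Set.univ, F x ∂(μ.prod ν) = 0) :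
    ∀ᵐ y ∂μ, ∫ t, F (y, t) ∂ν = 0 := by
  refine hF.integral_prod_left.ae_eq_zero_of_forall_setIntegral_eq_zero fun s hs _ => ?_
  rw [← h s hs, setIntegral_prod _ hF.integrableOn, Measure.restrict_univ]

theorem integral_sum_mul_affine {ι : Type*} [Fintype ι] {ν : Measure ℝ} {F : ι → ℝ → ℝ}
    (hF : ∀ q, Integrable (F q) ν) (hF' : ∀ q, Integrable (fun t => t * F q t) ν)
    (a b : ι → ℝ) :
    ∫ t, ∑ q, F q t * (a q + t * b q) ∂ν =
      ∑ q, (a q * ∫ t, F q t ∂ν + b q * ∫ t, t * F q t ∂ν) := by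
  have hsplit : ∀ t, ∑ q, F q t * (a q + t * b q) = ∑ q, (a q * F q t + b q * (t * F q t)) :=
    fun t => Finset.sum_congr rfl fun q _ => by ring
  simp_rw [hsplit]
  rw [integral_finsetSum Finset.univ (f := fun q t => a q * F q t + b q * (t * F q t))
    fun q _ => ((hF q).const_mul _).add ((hF' q).const_mul _)]
  refine Finset.sum_congr rfl fun q _ => ?_
  rw [integral_add ((hF q).const_mul _) ((hF' q).const_mul _), integral_const_mul,
    integral_const_mul]

theorem integral_indicator_mul {μ : Measure α} {T : Set α}
    (hT : MeasurableSet T) (k F : α → ℝ) :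
    ∫ x, T.indicator k x * F x ∂μ = ∫ x in T, k x * F x ∂μ := by
  simp_rw [← Set.indicator_mul_left]
  exact integral_indicator hT

end General

section SwapPair

variable {ι : Type*} [DecidableEq ι]

def swapPair (a : ι × ι) : EuclideanSpace ℝ (ι × ι) :=
  EuclideanSpace.single a 1 + EuclideanSpace.single a.swap 1

theorem swapPair_apply (a p : ι × ι) :
    swapPair a p = (if p = a then 1 else 0) + if p = a.swap then 1 else 0 := by
  simp [swapPair]

theorem swapPair_apply_swap (a p : ι × ι) : swapPair a p.swap = swapPair a p := by
  simp only [swapPair_apply, Prod.swap_eq_iff_eq_swap]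
  exact add_comm _ _

theorem inner_swapPair [Fintype ι] (v : EuclideanSpace ℝ (ι × ι)) (a : ι × ι) :
    ⟪v, swapPair a⟫ = v a + v a.swap := by
  simp [swapPair, inner_add_right, EuclideanSpace.inner_single_right]

theorem swapPair_map_map {κ : Type*} [DecidableEq κ] {e : κ → ι} (he : Function.Injective e)
    (a₁ a₂ p₁ p₂ : κ) : swapPair (e a₁, e a₂) (e p₁, e p₂) = swapPair (a₁, a₂) (p₁, p₂) := by
  simp only [swapPair_apply, Prod.swap_prod_mk, Prod.mk.injEq, he.eq_iff]

theorem swapPair_castSucc_last {n : ℕ} (i : Fin (n + 1)) (α β : Fin n) :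
    swapPair (i, Fin.last n) (α.castSucc, β.castSucc) = 0 := by
  simp [swapPair_apply, Fin.castSucc_ne_last]

theorem inner_eq_sum_castSucc {n : ℕ} (v w : EuclideanSpace ℝ (Fin (n + 1) × Fin (n + 1)))
    (hv : ∀ i, v (i, Fin.last n) = 0) (hv' : ∀ j, v (Fin.last n, j) = 0) :
    ⟪v, w⟫ =
      ∑ q : Fin n × Fin n, v (q.1.castSucc, q.2.castSucc) * w (q.1.castSucc, q.2.castSucc) := by
  simp [PiLp.inner_apply, Fintype.sum_prod_type, Fin.sum_univ_castSucc, hv, hv', mul_comm]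

end SwapPair

theorem MeasureTheory.Lp.memLp_apply {α ι : Type*} [MeasurableSpace α] [Fintype ι]
    {μ : Measure α} (f : Lp (EuclideanSpace ℝ ι) 2 μ) (i : ι) : MemLp (fun x => f x i) 2 μ :=
  (EuclideanSpace.proj i : EuclideanSpace ℝ ι →L[ℝ] ℝ).comp_memLp' (Lp.memLp f)

section Plate

variable {ω : Set P2}

instance : IsProbabilityMeasure (volume.restrict Ioo2) :=
  ⟨by norm_num [Ioo2, Real.volume_Ioo]⟩

theorem meas_eq_prod (ω : Set P2) :
    meas ω = (volume.restrict ω).prod (volume.restrict Ioo2) := by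
  rw [Measure.prod_restrict, meas, dom, Measure.volume_eq_prod]

instance [IsFiniteMeasure (volume.restrict ω)] : IsFiniteMeasure (meas ω) := by
  rw [meas_eq_prod]; infer_instance

theorem memLp_snd_meas [IsFiniteMeasure (meas ω)] : MemLp (fun x : Pt => x.2) 2 (meas ω) := by
  refine (memLp_top_of_bound continuous_snd.aestronglyMeasurable (1 / 2) ?_).mono_exponent le_top
  refine ae_restrict_of_ae_restrict_of_subset (Set.prod_mono (Set.subset_univ ω) subset_rfl) ?_
  filter_upwards [ae_restrict_mem (MeasurableSet.univ.prod measurableSet_Ioo)] with x hx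
  rw [Real.norm_eq_abs, abs_le]
  exact ⟨by linarith [hx.2.1], hx.2.2.le⟩

end Plate

section TestFields

variable {ω : Set P2}

theorem toLp_smul_swapPair_mem_Hset {g : Pt → ℝ} (hg : MemLp g 2 (meas ω))
    (a : Fin 3 × Fin 3) : (hg.smul_const (swapPair a)).toLp ∈ Hset ω := by
  filter_upwards [(hg.smul_const (swapPair a)).coeFn_toLp] with x hx i j
  simp only [hx, PiLp.smul_apply, smul_eq_mul, ← swapPair_apply_swap a (i, j), Prod.swap_prod_mk]

theorem toLp_smul_swapPair_last_mem_Lset {g : Pt → ℝ} (hg : MemLp g 2 (meas ω)) (i : Fin 3) :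
    (hg.smul_const (swapPair (i, 2))).toLp ∈ Lset ω := by
  refine ⟨toLp_smul_swapPair_mem_Hset hg _, 0, 0, MemLp.zero', MemLp.zero', by simp, ?_⟩
  filter_upwards [(hg.smul_const (swapPair (i, 2))).coeFn_toLp] with x hx α β
  simp [hx, show swapPair (i, 2) (α.castSucc, β.castSucc) = 0 from swapPair_castSucc_last i α β]

theorem toLp_smul_swapPair_castSucc_mem_Lset [IsFiniteMeasure (volume.restrict ω)] {s : Set P2}
    (hs : MeasurableSet s) (c₀ c₁ : ℝ) (α β : Fin 2)
    (hg : MemLp ((s ×ˢ Set.univ).indicator fun x : Pt => c₀ + c₁ * x.2) 2 (meas ω)) :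
    (hg.smul_const (swapPair (α.castSucc, β.castSucc))).toLp ∈ Lset ω := by
  have hcoef (c : ℝ) : MemLp (fun y => s.indicator (fun _ => c) y • swapPair (α, β)) 2
      (volume.restrict ω) :=
    (memLp_indicator_const 2 hs c (Or.inr (measure_ne_top _ _))).smul_const _
  refine ⟨toLp_smul_swapPair_mem_Hset hg _, _, _, hcoef c₀, hcoef c₁, ?_, ?_⟩
  · refine Filter.Eventually.of_forall fun y α' β' => ?_
    simp only [PiLp.smul_apply, smul_eq_mul, ← swapPair_apply_swap (α, β) (α', β'),
      Prod.swap_prod_mk, and_self]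
  · filter_upwards [(hg.smul_const (swapPair (α.castSucc, β.castSucc))).coeFn_toLp]
      with x hx α' β'
    rw [hx, PiLp.smul_apply, smul_eq_mul, swapPair_map_map (Fin.castSucc_injective 2)]
    by_cases hx1 : x.1 ∈ s
    · simp only [Set.mem_prod, hx1, Set.mem_univ, and_self, Set.indicator_of_mem,
        PiLp.smul_apply, smul_eq_mul]
      ring
    · simp [hx1]

end TestFields

section Orthogonal

variable {ω : Set P2} {S : Lp E9 2 (meas ω)}

theorem inner_toLp_smul_swapPair (hS : S ∈ Hset ω) {g : Pt → ℝ} (hg : MemLp g 2 (meas ω))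
    (a : Fin 3 × Fin 3) :
    ⟪S, (hg.smul_const (swapPair a)).toLp⟫ = 2 * ∫ x, g x * S x a ∂(meas ω) := by
  rw [L2.inner_toLp_smul_const hg, ← integral_const_mul]
  refine integral_congr_ae ?_
  filter_upwards [hS] with x hx
  rw [inner_swapPair, show S x a.swap = S x a from (hx a.1 a.2).symm]
  ring

theorem ae_apply_last_eq_zero_of_forall_inner_eq_zero [IsFiniteMeasure (meas ω)]
    (hS : S ∈ Hset ω) (horth : ∀ w ∈ Lset ω, ⟪S, w⟫ = 0) :
    ∀ᵐ x ∂(meas ω), ∀ i : Fin 3, S x (i, 2) = 0 := by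
  refine ae_all_iff.2 fun i => ?_
  have hint := (Lp.memLp_apply S (i, 2)).integrable one_le_two
  refine hint.ae_eq_zero_of_forall_setIntegral_eq_zero fun T hT hTfin => ?_
  have hg := memLp_indicator_const 2 hT (1 : ℝ) (Or.inr hTfin.ne)
  have h := horth _ (toLp_smul_swapPair_last_mem_Lset hg i)
  rw [inner_toLp_smul_swapPair hS hg, integral_indicator_mul hT] at h
  simpa using h

theorem ae_integral_affine_mul_eq_zero_of_forall_inner_eq_zero
    [IsFiniteMeasure (volume.restrict ω)] (hS : S ∈ Hset ω)
    (horth : ∀ w ∈ Lset ω, ⟪S, w⟫ = 0) (c₀ c₁ : ℝ) (α β : Fin 2) :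
    ∀ᵐ y ∂(volume.restrict ω),
      ∫ t in Ioo2, (c₀ + c₁ * t) * S (y, t) (α.castSucc, β.castSucc) = 0 := by
  have hk : MemLp (fun x : Pt => c₀ + c₁ * x.2) 2 (meas ω) :=
    (memLp_const c₀).add (memLp_snd_meas.const_mul c₁)
  have hF := hk.integrable_mul (Lp.memLp_apply S (α.castSucc, β.castSucc))
  simp only [meas_eq_prod] at hF
  refine ae_integral_eq_zero_of_forall_setIntegral_prod_eq_zero hF fun s hs => ?_
  have hT : MeasurableSet (s ×ˢ (Set.univ : Set ℝ)) := hs.prod MeasurableSet.univ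
  have hg := hk.indicator hT
  have h := horth _ (toLp_smul_swapPair_castSucc_mem_Lset hs c₀ c₁ α β hg)
  rw [inner_toLp_smul_swapPair hS hg, integral_indicator_mul hT] at h
  simp only [meas_eq_prod] at h
  simpa using h

theorem ae_integrable_fiber [IsFiniteMeasure (volume.restrict ω)] (p : Fin 3 × Fin 3) :
    ∀ᵐ y ∂(volume.restrict ω), Integrable (fun t => S (y, t) p) (volume.restrict Ioo2) ∧
      Integrable (fun t => t * S (y, t) p) (volume.restrict Ioo2) := by
  have h0 := (Lp.memLp_apply S p).integrable one_le_two
  have h1 := memLp_snd_meas.integrable_mul (Lp.memLp_apply S p)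
  simp only [meas_eq_prod] at h0 h1
  filter_upwards [h0.prod_right_ae, h1.prod_right_ae] with y hy0 hy1
  exact ⟨hy0, hy1⟩

theorem inner_eq_zero_of_moments_eq_zero [IsFiniteMeasure (volume.restrict ω)]
    (hS : S ∈ Hset ω) (hlast : ∀ᵐ x ∂(meas ω), ∀ i : Fin 3, S x (i, 2) = 0)
    (hmom : ∀ α β : Fin 2, ∀ᵐ y ∂(volume.restrict ω),
      (∫ t in Ioo2, S (y, t) (α.castSucc, β.castSucc)) = 0
        ∧ (∫ t in Ioo2, t * S (y, t) (α.castSucc, β.castSucc)) = 0)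
    {w : Lp E9 2 (meas ω)} (hw : w ∈ Lset ω) : ⟪S, w⟫ = 0 := by
  obtain ⟨-, A, B, -, -, -, hblock⟩ := hw
  have hae : (fun x => ⟪S x, w x⟫) =ᵐ[meas ω] fun x =>
      ∑ q : Fin 2 × Fin 2, S x (q.1.castSucc, q.2.castSucc) * (A x.1 q + x.2 * B x.1 q) := by
    filter_upwards [hS, hlast, hblock] with x hxsymm hxlast hxblock
    rw [inner_eq_sum_castSucc _ _ hxlast fun j => (hxsymm _ _).trans (hxlast j)]
    exact Finset.sum_congr rfl fun q _ => by rw [hxblock]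
  have hint := (L2.integrable_inner S w).congr hae
  rw [L2.inner_def, integral_congr_ae hae]
  simp only [meas_eq_prod] at hint ⊢
  rw [integral_prod _ hint]
  refine integral_eq_zero_of_ae ?_
  filter_upwards [ae_all_iff.2 (ae_integrable_fiber (S := S)), ae_all_iff.2 fun α =>
    ae_all_iff.2 (hmom α)] with y hfib hmomy
  rw [integral_sum_mul_affine (fun q => (hfib _).1) (fun q => (hfib _).2)]
  simp [hmomy]

end Orthogonal

theorem mem_orthogonal_iff_moments_vanish_general
    (ω : Set P2) (hbdd : Bornology.IsBounded ω) :
    ∀ S ∈ Hset ω,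
      ((∀ w ∈ Lset ω, ⟪S, w⟫ = 0) ↔
        ((∀ᵐ x ∂(meas ω), ∀ i : Fin 3, S x (i, (2 : Fin 3)) = 0)
          ∧ ∀ α β : Fin 2, ∀ᵐ y ∂(volume.restrict ω),
              (∫ t in Ioo2, S (y, t) (α.castSucc, β.castSucc)) = 0
              ∧ (∫ t in Ioo2, t * S (y, t) (α.castSucc, β.castSucc)) = 0)) := by
  intro S hS
  have : IsFiniteMeasure (volume.restrict ω) :=
    isFiniteMeasure_restrict.2 hbdd.measure_lt_top.ne
  refine ⟨fun horth => ⟨ae_apply_last_eq_zero_of_forall_inner_eq_zero hS horth, fun α β => ?_⟩,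
    fun ⟨hlast, hmom⟩ _ hw => inner_eq_zero_of_moments_eq_zero hS hlast hmom hw⟩
  filter_upwards [ae_integral_affine_mul_eq_zero_of_forall_inner_eq_zero hS horth 1 0 α β,
    ae_integral_affine_mul_eq_zero_of_forall_inner_eq_zero hS horth 0 1 α β] with y hN hM
  simpa using And.intro hN hM

/-- Let `ω ⊂ ℝ²` be bounded, measurable, of positive measure,
`Ω := ω × (−1/2,1/2)`, `H := L²(Ω; Sym₃)` and `𝓛` as above.  Then `Σ ∈ H` belongs to
`𝓛⊥` if and only if `Σ_{i3} = 0` a.e. in `Ω` for `i = 1,2,3` and the zeroth and first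
`x₃`-moments `Σᴺ_{αβ}`, `Σᴹ_{αβ}` vanish a.e. in `ω` for all `α, β ∈ {1,2}`. -/
theorem mem_orthogonal_iff_moments_vanish
    (ω : Set P2) (hmeas : MeasurableSet ω) (hbdd : Bornology.IsBounded ω)
    (hpos : 0 < volume ω) :
    ∀ S ∈ Hset ω,
      ((∀ w ∈ Lset ω, ⟪S, w⟫ = 0) ↔
        ((∀ᵐ x ∂(meas ω), ∀ i : Fin 3, S x (i, (2 : Fin 3)) = 0)
          ∧ ∀ α β : Fin 2, ∀ᵐ y ∂(volume.restrict ω),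
              (∫ t in Ioo2, S (y, t) (α.castSucc, β.castSucc)) = 0
              ∧ (∫ t in Ioo2, t * S (y, t) (α.castSucc, β.castSucc)) = 0)) :=
  mem_orthogonal_iff_moments_vanish_general ω hbdd
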